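/- arXiv:2407.06106 — 3 statements merged into one kernel-verified Lean document; each statement's English description precedes it below -/
import Mathlib

section
/- If v is a Caminada labeling of a Dung framework D, then the support of M(v), where M(v)(a) = 1 if v(a) = 1 and 0 otherwise, is a complete extension of D. -/
/-- Caminada labeling: `some true` = 1, `some false` = 0, `none` = u. -/
def IsCaminada {A : Type*} (R : A → A → Prop) (v : A → Option Bool) : Prop :=
  ∀ a,
    ((∀ b, R b a → v b = some false) → v a = some true) ∧
    ((∃ b, R b a ∧ v b = some true) → v a = some false) ∧
    (¬ (∀ b, R b a → v b = some false) → ¬ (∃ b, R b a ∧ v b = some true) →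
      v a = none)

/-- The map M from three-valued to two-valued: M(v)(a) = 1 if v(a) = 1 and 0
otherwise. -/
def MMap {A : Type*} (v : A → Option Bool) (a : A) : Bool :=
  v a = some true

lemma mmap_true {A : Type*} (v : A → Option Bool) (a : A) :
    MMap v a = true ↔ v a = some true := by simp [MMap]

lemma mmap_false {A : Type*} (v : A → Option Bool) (a : A) :
    MMap v a = false ↔ v a ≠ some true := by simp [MMap]

/-- If `v a = some true` then all attackers of `a` are labeled false. -/
lemma attackers_false {A : Type*} {R : A → A → Prop} {v : A → Option Bool}
    (hv : IsCaminada R v) {a : A} (ha : v a = some true) :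
    ∀ b, R b a → v b = some false := by
  by_contra h
  obtain ⟨_, h2, h3⟩ := hv a
  by_cases h' : ∃ b, R b a ∧ v b = some true
  · simp [h2 h'] at ha
  · simp [h3 h h'] at ha

/-- If `v b = some false` then `b` has an attacker labeled true. -/
lemma has_true_attacker {A : Type*} {R : A → A → Prop} {v : A → Option Bool}
    (hv : IsCaminada R v) {b : A} (hb : v b = some false) :
    ∃ c, R c b ∧ v c = some true := by
  by_contra h
  obtain ⟨h1, _, h3⟩ := hv b
  by_cases h' : ∀ c, R c b → v c = some false
  · simp [h1 h'] at hb
  · simp [h3 h' h] at hb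

/-- If v is a Caminada labeling of D, then the support of M(v)
is a complete extension of D: it is conflict-free and its indicator function
M(v) is a fixed point of F_D = f_D ∘ f_D. -/
theorem caminada_gives_complete_extension
    {A : Type*} [Fintype A] (R : A → A → Prop)
    (fD : (A → Bool) → A → Bool)
    (hf : ∀ x a, fD x a = true ↔ ∀ b, R b a → x b = false)
    (v : A → Option Bool) (hv : IsCaminada R v) :
    (∀ a, MMap v a = true → ∀ b, MMap v b = true → ¬ R a b) ∧
      fD (fD (MMap v)) = MMap v := by
  constructor
  · intro a ha b hb hab
    rw [mmap_true] at ha hb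
    have := attackers_false hv hb a hab
    simp [ha] at this
  · funext a
    by_cases hva : v a = some true
    · rw [(mmap_true v a).2 hva, hf]
      intro b hba
      have hbf : v b = some false := attackers_false hv hva b hba
      obtain ⟨c, hcb, hc⟩ := has_true_attacker hv hbf
      rw [Bool.eq_false_iff]
      intro hfb
      have := ((hf (MMap v) b).1 hfb) c hcb
      rw [mmap_false] at this
      exact this hc
    · rw [(mmap_false v a).2 hva, Bool.eq_false_iff]
      intro hfa
      have key : ∀ b, R b a → v b = some false := by
        intro b hba
        have hfb := ((hf (fD (MMap v)) a).1 hfa) b hba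
        rw [Bool.eq_false_iff] at hfb
        have : ∃ c, R c b ∧ MMap v c = true := by
          by_contra h
          push_neg at h
          exact hfb ((hf (MMap v) b).2 fun c hcb => by
            have := h c hcb
            simpa using this)
        obtain ⟨c, hcb, hc⟩ := this
        rw [mmap_true] at hc
        exact (hv b).2.1 ⟨c, hcb, hc⟩
      exact hva ((hv a).1 key)
end

section
/- If an abstract dialectical framework D has all acceptance conditions of the form φ_a = ⋀_{b ∈ par(a)} ¬b (i.e., D is a Dung framework), then the characteristic operator Γ_D equals the three-valued update function g_D. -/
attribute [local instance] Classical.propDecidable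

/-- Completions of a three-valued interpretation (`none` = u). -/
def IsCompletion {A : Type*} (v : A → Option Bool) (x : A → Bool) : Prop :=
  ∀ a, v a ≠ none → v a = some (x a)

/-- The characteristic operator Γ_D of an ADF with acceptance conditions φ. -/
noncomputable def Gamma {A : Type*} (φ : A → (A → Bool) → Bool)
    (v : A → Option Bool) (a : A) : Option Bool :=
  if ∀ x, IsCompletion v x → φ a x = true then some true
  else if ∀ x, IsCompletion v x → φ a x = false then some false
  else none

/-- The three-valued update function g_D of a Dung framework (A,R). -/
noncomputable def gD {A : Type*} (R : A → A → Prop)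
    (v : A → Option Bool) (a : A) : Option Bool :=
  if ∀ b, R b a → v b = some false then some true
  else if ∃ b, R b a ∧ v b = some true then some false
  else none

/-- If every acceptance condition of an ADF D is the conjunction
of the negations of the attackers, φ_a = ⋀_{b ∈ par(a)} ¬b (i.e. D is a Dung
framework), then the characteristic operator Γ_D equals the three-valued
update function g_D. -/
theorem gamma_eq_gD_for_dung
    {A : Type*} [Fintype A] (R : A → A → Prop)
    (φ : A → (A → Bool) → Bool)
    (hφ : ∀ a x, φ a x = true ↔ ∀ b, R b a → x b = false) :
    Gamma φ = gD R := by
  funext v a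
  unfold Gamma gD
  by_cases h1 : ∀ b, R b a → v b = some false
  · have hG1 : ∀ x, IsCompletion v x → φ a x = true := by
      intro x hx
      rw [hφ]
      intro b hb
      have := hx b (by rw [h1 b hb]; simp)
      rw [h1 b hb] at this
      exact (Option.some_injective _ this).symm
    rw [if_pos hG1, if_pos h1]
  · by_cases h2 : ∃ b, R b a ∧ v b = some true
    · obtain ⟨b, hb, hvb⟩ := h2
      -- every completion makes φ false
      have hG2 : ∀ x, IsCompletion v x → φ a x = false := by
        intro x hx
        have := hx b (by rw [hvb]; simp)
        rw [hvb] at this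
        have hxb : x b = true := (Option.some_injective _ this).symm
        by_contra hne
        have := (hφ a x).1 (by simpa using hne) b hb
        rw [hxb] at this; exact Bool.noConfusion this
      have hG1 : ¬ ∀ x, IsCompletion v x → φ a x = true := by
        intro hall
        set x : A → Bool := fun c => (v c).getD false with hxdef
        have hc : IsCompletion v x := by
          intro c hcn
          cases hvc : v c with
          | none => exact absurd hvc hcn
          | some t => simp [hxdef, hvc]
        have h3 := hG2 x hc
        rw [hall x hc] at h3; exact Bool.noConfusion h3
      rw [if_neg hG1, if_pos hG2, if_neg h1, if_pos ⟨b, hb, hvb⟩]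
    · push_neg at h1
      obtain ⟨b0, hb0, hvb0⟩ := h1
      push_neg at h2
      have hvnone : v b0 = none := by
        cases hv : v b0 with
        | none => rfl
        | some t =>
          cases t
          · exact absurd hv hvb0
          · exact absurd hv (h2 b0 hb0)
      have hG1 : ¬ ∀ x, IsCompletion v x → φ a x = true := by
        intro hall
        set x : A → Bool := fun c => if v c = some false then false else true with hxdef
        have hc : IsCompletion v x := by
          intro c hcn
          cases hvc : v c with
          | none => exact absurd hvc hcn
          | some t =>
            cases t
            · simp [hxdef, hvc]
            · have hne : v c ≠ some false := by rw [hvc]; simp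
              simp [hxdef, hvc, hne]
        have htrue : x b0 = true := by
          have hne : v b0 ≠ some false := by rw [hvnone]; simp
          simp [hxdef, hne]
        have := (hφ a x).1 (hall x hc) b0 hb0
        rw [htrue] at this; exact Bool.noConfusion this
      have hG2 : ¬ ∀ x, IsCompletion v x → φ a x = false := by
        intro hall
        set x : A → Bool := fun c => if v c = some true then true else false with hxdef
        have hc : IsCompletion v x := by
          intro c hcn
          cases hvc : v c with
          | none => exact absurd hvc hcn
          | some t =>
            cases t
            · have hne : v c ≠ some true := by rw [hvc]; simp
              simp [hxdef, hvc, hne]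
            · simp [hxdef, hvc]
        have ht : φ a x = true := by
          rw [hφ]
          intro b hb
          simp [hxdef, h2 b hb]
        rw [hall x hc] at ht; exact Bool.noConfusion ht
      have h1' : ¬ ∀ b, R b a → v b = some false := by
        intro h; exact hvb0 (h b0 hb0)
      have h2' : ¬ ∃ b, R b a ∧ v b = some true := by
        rintro ⟨b, hb, hvb⟩; exact h2 b hb hvb
      rw [if_neg hG1, if_neg hG2, if_neg h1', if_neg h2']
end

section
/- A three-valued interpretation v is admissible for an ADF D (i.e., v ≤_i Γ_D(v)) if and only if the set of completions of v is a trap space, i.e., for every completion x of v, the synchronous successor f_D(x) is also a completion of v. -/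
attribute [local instance] Classical.propDecidable

/-- Information order on {0,1,u}: u below 0 and 1. -/
def leI (p q : Option Bool) : Prop := p = none ∨ p = q

lemma exists_completion {A : Type*} (v : A → Option Bool) :
    IsCompletion v (fun a => (v a).getD false) := by
  intro a ha
  cases h : v a with
  | none => exact absurd h ha
  | some b => simp [h]

/-- A three-valued interpretation v is admissible
(v ≤_i Γ_D(v)) iff its set of completions is a trap space: for every
completion x of v, the synchronous successor f_D(x) = (a ↦ x(φ_a)) is also a
completion of v. -/
theorem admissible_iff_trap_space
    {A : Type*} [Fintype A] (φ : A → (A → Bool) → Bool)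
    (v : A → Option Bool) :
    (∀ a, leI (v a) (Gamma φ v a)) ↔
      (∀ x, IsCompletion v x → IsCompletion v (fun a => φ a x)) := by
  constructor
  · intro h x hx a ha
    rcases h a with h0 | h0
    · exact absurd h0 ha
    · rw [h0]
      unfold Gamma at h0 ⊢
      split_ifs at h0 ⊢ with h1 h2
      · simp [h1 x hx]
      · simp [h2 x hx]
      · exact absurd h0 ha
  · intro h a
    cases hv : v a with
    | none => exact Or.inl rfl
    | some b =>
      right
      have key : ∀ x, IsCompletion v x → φ a x = b := by
        intro x hx
        have := h x hx a (by simp [hv])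
        rw [hv] at this
        exact (Option.some.injEq _ _ ▸ this).symm
      unfold Gamma
      cases b with
      | true =>
        rw [if_pos key]
      | false =>
        rw [if_neg, if_pos key]
        intro hall
        have := key _ (exists_completion v)
        have := hall _ (exists_completion v)
        simp_all
end
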